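/- Let 0 < μ < 1, A an n×n real matrix, g : [0,∞) → ℝⁿ continuous and Ψ-exponentially bounded (‖g(t)‖_∞ ≤ M e^{c·Ψ(t)}), and y the unique continuous solution of the Ψ-Caputo system ᶜ₀D^μ_{Ψ(t)} y(t) = A y(t) + g(t), y(0) = η. Then y is Ψ-exponentially bounded: there exists a constant C' > 0 such that ‖y(t)‖_∞ ≤ C' e^{(‖A‖_∞^{1/μ} + c)·Ψ(t)} for all t ≥ 0. -/

import Mathlib

/-!
Put `b = K ^ (1 / μ) + c`, so that `K * b ^ (-μ) < 1`. Substituting `s = Ψ τ` and comparing with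
the Gamma integral gives
`∫₀ᵗ (Ψ t - Ψ τ) ^ (μ - 1) Ψ' τ e^{b Ψ τ} dτ ≤ Γ(μ) b ^ (-μ) e^{b Ψ t}`,
so if `‖y‖ ≤ C e^{b Ψ}` on `[0, t)`, the Volterra equation yields
`‖y t‖ ≤ (‖η‖ + (K C + M) b ^ (-μ)) e^{b Ψ t}`, which is `< C e^{b Ψ t}` once `C` is large,
because `K b ^ (-μ) < 1`. By continuity of `y`, the bound `‖y‖ ≤ C e^{b Ψ}` can therefore never
fail for a first time; no Grönwall inequality or Mittag-Leffler bound is needed.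
-/

open MeasureTheory Real Set intervalIntegral Filter Topology

theorem intervalIntegrable_sub_rpow_mul_exp {μ : ℝ} (hμ : 0 < μ) (b a T : ℝ) :
    IntervalIntegrable (fun s => (T - s) ^ (μ - 1) * exp (b * s)) volume a T := by
  have hpow : IntervalIntegrable (fun s => (T - s) ^ (μ - 1)) volume a T := by
    simpa using ((intervalIntegrable_rpow' (a := 0) (b := T - a) (r := μ - 1)
      (by linarith)).comp_sub_left T).symm
  exact hpow.mul_continuousOn (by fun_prop)

theorem integral_sub_rpow_mul_exp_le {μ b a T : ℝ} (hμ : 0 < μ) (hb : 0 < b) (haT : a ≤ T) :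
    ∫ s in a..T, (T - s) ^ (μ - 1) * exp (b * s) ≤ Gamma μ * b ^ (-μ) * exp (b * T) := by
  have hsubst : ∫ s in a..T, (T - s) ^ (μ - 1) * exp (b * s) =
      exp (b * T) * ∫ r in (0:ℝ)..T - a, r ^ (μ - 1) * exp (-(b * r)) := by
    rw [← intervalIntegral.integral_const_mul]
    simpa [mul_sub, ← exp_add, mul_left_comm] using
      integral_comp_sub_left (a := a) (b := T)
        (fun r => exp (b * T) * (r ^ (μ - 1) * exp (-(b * r)))) T
  have hIoi : IntegrableOn (fun r : ℝ => r ^ (μ - 1) * exp (-(b * r))) (Ioi 0) := by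
    simpa using integrableOn_rpow_mul_exp_neg_mul_rpow (by linarith : (-1:ℝ) < μ - 1)
      zero_lt_one hb
  have htrunc : ∫ r in (0:ℝ)..T - a, r ^ (μ - 1) * exp (-(b * r)) ≤
      ∫ r in Ioi 0, r ^ (μ - 1) * exp (-(b * r)) := by
    rw [intervalIntegral.integral_of_le (by linarith)]
    refine setIntegral_mono_set hIoi ?_ Ioc_subset_Ioi_self.eventuallyLE
    filter_upwards [ae_restrict_mem measurableSet_Ioi] with r (hr : 0 < r)
    positivity
  calc _ = exp (b * T) * ∫ r in (0:ℝ)..T - a, r ^ (μ - 1) * exp (-(b * r)) := hsubst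
    _ ≤ exp (b * T) * ∫ r in Ioi 0, r ^ (μ - 1) * exp (-(b * r)) := by gcongr
    _ = Gamma μ * b ^ (-μ) * exp (b * T) := by
        rw [integral_rpow_mul_exp_neg_mul_Ioi hμ hb, one_div, inv_rpow hb.le, ← rpow_neg hb.le]
        ring

theorem MonotoneOn.deriv_nonneg_of_mem_nhds {g : ℝ → ℝ} {s : Set ℝ} {x : ℝ}
    (hg : MonotoneOn g s) (hs : s ∈ 𝓝 x) : 0 ≤ deriv g x := by
  rw [← derivWithin_of_mem_nhds hs]
  exact hg.derivWithin_nonneg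

noncomputable def psiKernel (Ψ : ℝ → ℝ) (μ t τ : ℝ) : ℝ := (Ψ t - Ψ τ) ^ (μ - 1) * deriv Ψ τ

/-- `psiIntegral Ψ μ F t` is the Ψ-Riemann–Liouville integral `I^μ_{0+;Ψ} F (t)`. -/
noncomputable def psiIntegral {E : Type*} [NormedAddCommGroup E] [NormedSpace ℝ E]
    (Ψ : ℝ → ℝ) (μ : ℝ) (F : ℝ → E) (t : ℝ) : E :=
  (1 / Gamma μ) • ∫ τ in (0:ℝ)..t, psiKernel Ψ μ t τ • F τ

section PsiKernel

variable {Ψ : ℝ → ℝ} {μ t : ℝ}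

theorem psiKernel_nonneg (hmono : MonotoneOn Ψ (Ici 0)) {τ : ℝ} (hτ : τ ∈ Ioo 0 t) :
    0 ≤ psiKernel Ψ μ t τ :=
  mul_nonneg (rpow_nonneg (sub_nonneg.2 (hmono hτ.1.le (hτ.1.trans hτ.2).le hτ.2.le)) _)
    (hmono.deriv_nonneg_of_mem_nhds (Ici_mem_nhds hτ.1))

theorem deriv_nonneg_of_monotoneOn_Ici (hmono : MonotoneOn Ψ (Ici 0)) (ht : 0 ≤ t) :
    ∀ τ ∈ Ioo (min 0 t) (max 0 t), 0 ≤ deriv Ψ τ := fun _ hτ =>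
  hmono.deriv_nonneg_of_mem_nhds (Ici_mem_nhds ((le_min le_rfl ht).trans_lt hτ.1))

theorem intervalIntegrable_psiKernel_mul_exp (hΨ : Differentiable ℝ Ψ)
    (hmono : MonotoneOn Ψ (Ici 0)) (hμ : 0 < μ) (ht : 0 ≤ t) (b : ℝ) :
    IntervalIntegrable (fun τ => psiKernel Ψ μ t τ * exp (b * Ψ τ)) volume 0 t := by
  have := (integrable_comp_mul_deriv_iff_of_deriv_nonneg hΨ.continuous.continuousOn
    (fun τ _ => (hΨ τ).hasDerivAt) (deriv_nonneg_of_monotoneOn_Ici hmono ht)).2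
    (intervalIntegrable_sub_rpow_mul_exp hμ b (Ψ 0) (Ψ t))
  simpa only [psiKernel, Function.comp_apply, mul_right_comm] using this

theorem integral_psiKernel_mul_exp_eq (hΨ : Differentiable ℝ Ψ) (hmono : MonotoneOn Ψ (Ici 0))
    (ht : 0 ≤ t) (b : ℝ) :
    ∫ τ in (0:ℝ)..t, psiKernel Ψ μ t τ * exp (b * Ψ τ) =
      ∫ s in Ψ 0..Ψ t, (Ψ t - s) ^ (μ - 1) * exp (b * s) := by
  rw [← integral_comp_mul_deriv_of_deriv_nonneg hΨ.continuous.continuousOn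
    (fun τ _ => (hΨ τ).hasDerivAt) (deriv_nonneg_of_monotoneOn_Ici hmono ht)]
  simp only [psiKernel, Function.comp_apply, mul_right_comm]

theorem integral_psiKernel_mul_exp_le (hΨ : Differentiable ℝ Ψ) (hmono : MonotoneOn Ψ (Ici 0))
    (hμ : 0 < μ) {b : ℝ} (hb : 0 < b) (ht : 0 ≤ t) :
    ∫ τ in (0:ℝ)..t, psiKernel Ψ μ t τ * exp (b * Ψ τ) ≤ Gamma μ * b ^ (-μ) * exp (b * Ψ t) := by
  rw [integral_psiKernel_mul_exp_eq hΨ hmono ht]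
  exact integral_sub_rpow_mul_exp_le hμ hb (hmono self_mem_Ici ht ht)

end PsiKernel

theorem norm_psiIntegral_le {E : Type*} [NormedAddCommGroup E] [NormedSpace ℝ E]
    {Ψ : ℝ → ℝ} {μ b L t : ℝ} {F : ℝ → E} (hΨ : Differentiable ℝ Ψ)
    (hmono : MonotoneOn Ψ (Ici 0)) (hμ : 0 < μ) (hb : 0 < b) (hL : 0 ≤ L) (ht : 0 ≤ t)
    (hF : ∀ τ ∈ Ioo 0 t, ‖F τ‖ ≤ L * exp (b * Ψ τ)) :
    ‖psiIntegral Ψ μ F t‖ ≤ L * b ^ (-μ) * exp (b * Ψ t) := by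
  have hΓ : 0 < Gamma μ := Gamma_pos_of_pos hμ
  have hpointwise : ∀ᵐ τ, τ ∈ Ioc 0 t →
      ‖psiKernel Ψ μ t τ • F τ‖ ≤ L * (psiKernel Ψ μ t τ * exp (b * Ψ τ)) := by
    filter_upwards [Measure.ae_ne volume t] with τ hτt hτ
    have hk := psiKernel_nonneg (μ := μ) hmono ⟨hτ.1, lt_of_le_of_ne hτ.2 hτt⟩
    rw [norm_smul, Real.norm_of_nonneg hk, mul_left_comm]
    exact mul_le_mul_of_nonneg_left (hF τ ⟨hτ.1, lt_of_le_of_ne hτ.2 hτt⟩) hk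
  calc ‖psiIntegral Ψ μ F t‖
      ≤ (1 / Gamma μ) * (L * ∫ τ in (0:ℝ)..t, psiKernel Ψ μ t τ * exp (b * Ψ τ)) := by
        rw [psiIntegral, norm_smul, Real.norm_of_nonneg (by positivity),
          ← intervalIntegral.integral_const_mul]
        gcongr
        exact norm_integral_le_of_norm_le ht hpointwise
          ((intervalIntegrable_psiKernel_mul_exp hΨ hmono hμ ht b).const_mul L)
    _ ≤ (1 / Gamma μ) * (L * (Gamma μ * b ^ (-μ) * exp (b * Ψ t))) := by
        gcongr
        exact integral_psiKernel_mul_exp_le hΨ hmono hμ hb ht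
    _ = L * b ^ (-μ) * exp (b * Ψ t) := by field_simp

theorem le_of_forall_Ico_le_imp_lt {f h : ℝ → ℝ} {a : ℝ} (hf : ContinuousOn f (Ici a))
    (hh : ContinuousOn h (Ici a)) (hstep : ∀ t ≥ a, (∀ τ ∈ Ico a t, f τ ≤ h τ) → f t < h t) :
    ∀ t ≥ a, f t ≤ h t := by
  by_contra! hbad
  set B := {t | a ≤ t ∧ h t < f t}
  have hB : B.Nonempty := hbad
  have hBbdd : BddBelow B := ⟨a, fun _ hx => hx.1⟩
  have ha : a ≤ sInf B := le_csInf hB fun _ hx => hx.1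
  have hlt : f (sInf B) < h (sInf B) := hstep _ ha fun τ hτ =>
    not_lt.1 fun hτB => (csInf_le hBbdd ⟨hτ.1, hτB⟩).not_gt hτ.2
  have : (𝓝[B] sInf B).NeBot := mem_closure_iff_nhdsWithin_neBot.1 (csInf_mem_closure hB hBbdd)
  have hlim : Tendsto (fun t => h t - f t) (𝓝[B] sInf B) (𝓝 (h (sInf B) - f (sInf B))) :=
    ((hh.sub hf) _ ha).mono_left (nhdsWithin_mono _ fun _ hx => hx.1)
  have : h (sInf B) - f (sInf B) ≤ 0 :=
    le_of_tendsto hlim (eventually_nhdsWithin_of_forall fun _ hx => (sub_neg.2 hx.2).le)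
  linarith

attribute [local instance] Matrix.linftyOpNormedAddCommGroup in
theorem Matrix.norm_mulVec_le_of_isGreatest_rowSum {m n : Type*} [Fintype m] [Fintype n]
    (A : Matrix m n ℝ) {K : ℝ} (hK : IsGreatest (range fun i => ∑ j, |A i j|) K) (v : n → ℝ) :
    ‖A.mulVec v‖ ≤ K * ‖v‖ := by
  obtain ⟨i₀, rfl⟩ := hK.1
  refine (linfty_opNorm_mulVec A v).trans (mul_le_mul_of_nonneg_right ?_ (norm_nonneg v))
  rw [linfty_opNorm_def]
  have hrow : ∀ i, ∑ j, ‖A i j‖₊ ≤ ∑ j, ‖A i₀ j‖₊ := fun i => by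
    have := hK.2 (mem_range_self i)
    simp only [← Real.norm_eq_abs, ← coe_nnnorm] at this
    exact_mod_cast this
  simpa [← Real.norm_eq_abs, ← coe_nnnorm] using
    NNReal.coe_le_coe.2 (Finset.sup_le fun i _ => hrow i)

theorem mul_add_rpow_neg_lt_one {K μ c : ℝ} (hK : 0 ≤ K) (hμ : 0 < μ) (hc : 0 < c) :
    K * (K ^ (1 / μ) + c) ^ (-μ) < 1 := by
  have hb : 0 < K ^ (1 / μ) + c := by positivity
  rw [rpow_neg hb.le, ← div_eq_mul_inv, div_lt_one (by positivity),
    ← rpow_inv_lt_iff_of_pos hK hb.le hμ, ← one_div]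
  linarith

theorem exists_pos_add_mul_lt_self {α θ : ℝ} (hα : 0 ≤ α) (hθ : θ < 1) :
    ∃ C > 0, α + θ * C < C := by
  refine ⟨(α + 1) / (1 - θ), div_pos (by linarith) (by linarith), ?_⟩
  have : (1 - θ) * ((α + 1) / (1 - θ)) = α + 1 := mul_div_cancel₀ _ (by linarith)
  linarith

theorem psi_caputo_system_solution_exponentially_bounded_general
    (n : ℕ) (Ψ : ℝ → ℝ) (μ c M K : ℝ)
    (A : Matrix (Fin n) (Fin n) ℝ)
    (g y : ℝ → (Fin n → ℝ)) (η : Fin n → ℝ)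
    (hΨC1 : ContDiff ℝ 1 Ψ)
    (hΨmono : StrictMonoOn Ψ (Ici 0))
    (hΨnonneg : ∀ t ≥ (0:ℝ), 0 ≤ Ψ t)
    (hμ0 : 0 < μ)
    (hc : 0 < c) (hM : 0 < M)
    (hgbound : ∀ t ≥ (0:ℝ), ‖g t‖ ≤ M * Real.exp (c * Ψ t))
    (hK : IsGreatest (range fun i => ∑ j, |A i j|) K)
    (hy : ContinuousOn y (Ici 0))
    -- y is the (unique) continuous solution, i.e. it satisfies the equivalent
    -- Volterra integral equation:
    (hyeq : ∀ t ≥ (0:ℝ), y t = η + (1 / Real.Gamma μ) •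
      ∫ τ in (0:ℝ)..t, ((Ψ t - Ψ τ) ^ (μ - 1) * deriv Ψ τ) • (A.mulVec (y τ) + g τ)) :
    ∃ C' > (0:ℝ), ∀ t ≥ (0:ℝ),
      ‖y t‖ ≤ C' * Real.exp ((K ^ (1 / μ) + c) * Ψ t) := by
  have hΨ : Differentiable ℝ Ψ := hΨC1.differentiable one_ne_zero
  obtain ⟨i₀, hi₀⟩ := hK.1
  have hK0 : 0 ≤ K := hi₀ ▸ Finset.sum_nonneg fun j _ => abs_nonneg (A i₀ j)
  set b := K ^ (1 / μ) + c
  have hb : 0 < b := by positivity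
  obtain ⟨C, hC, hCfix⟩ := exists_pos_add_mul_lt_self (α := ‖η‖ + M * b ^ (-μ))
    (by positivity) (mul_add_rpow_neg_lt_one hK0 hμ0 hc)
  have hΨcont := hΨ.continuous
  refine ⟨C, hC, le_of_forall_Ico_le_imp_lt hy.norm (by fun_prop) fun t ht hbefore => ?_⟩
  have hF : ∀ τ ∈ Ioo 0 t, ‖A.mulVec (y τ) + g τ‖ ≤ (K * C + M) * exp (b * Ψ τ) := by
    intro τ hτ
    have hexp : exp (c * Ψ τ) ≤ exp (b * Ψ τ) :=
      exp_le_exp.2 (by gcongr; exacts [hΨnonneg τ hτ.1.le, le_add_of_nonneg_left (by positivity)])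
    calc ‖A.mulVec (y τ) + g τ‖ ≤ K * ‖y τ‖ + M * exp (c * Ψ τ) :=
          norm_add_le_of_le (A.norm_mulVec_le_of_isGreatest_rowSum hK _) (hgbound τ hτ.1.le)
      _ ≤ K * (C * exp (b * Ψ τ)) + M * exp (b * Ψ τ) := by
          gcongr
          exact hbefore τ ⟨hτ.1.le, hτ.2⟩
      _ = (K * C + M) * exp (b * Ψ τ) := by ring
  have hI := norm_psiIntegral_le hΨ hΨmono.monotoneOn hμ0 hb (by positivity) ht hF
  have hexp_ge_one : 1 ≤ exp (b * Ψ t) := one_le_exp (mul_nonneg hb.le (hΨnonneg t ht))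
  calc ‖y t‖ ≤ ‖η‖ + (K * C + M) * b ^ (-μ) * exp (b * Ψ t) := by
        rw [hyeq t ht]
        exact norm_add_le_of_le le_rfl hI
    _ ≤ (‖η‖ + M * b ^ (-μ) + K * b ^ (-μ) * C) * exp (b * Ψ t) := by
        nlinarith [norm_nonneg η]
    _ < C * exp (b * Ψ t) := mul_lt_mul_of_pos_right hCfix (exp_pos _)

theorem psi_caputo_system_solution_exponentially_bounded
    (n : ℕ) (Ψ : ℝ → ℝ) (μ c M K : ℝ)
    (A : Matrix (Fin n) (Fin n) ℝ)
    (g y : ℝ → (Fin n → ℝ)) (η : Fin n → ℝ)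
    (hΨC1 : ContDiff ℝ 1 Ψ)
    (hΨmono : StrictMonoOn Ψ (Ici 0))
    (hΨnonneg : ∀ t ≥ (0:ℝ), 0 ≤ Ψ t)
    (hΨ0 : Ψ 0 = 0)
    (hμ0 : 0 < μ) (hμ1 : μ < 1)
    (hc : 0 < c) (hM : 0 < M)
    (hg : ContinuousOn g (Ici 0))
    (hgbound : ∀ t ≥ (0:ℝ), ‖g t‖ ≤ M * Real.exp (c * Ψ t))
    (hK : IsGreatest (range fun i => ∑ j, |A i j|) K)
    (hy : ContinuousOn y (Ici 0))
    (hy0 : y 0 = η)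
    -- y is the (unique) continuous solution, i.e. it satisfies the equivalent
    -- Volterra integral equation:
    (hyeq : ∀ t ≥ (0:ℝ), y t = η + (1 / Real.Gamma μ) •
      ∫ τ in (0:ℝ)..t, ((Ψ t - Ψ τ) ^ (μ - 1) * deriv Ψ τ) • (A.mulVec (y τ) + g τ))
    (huniq : ∀ z : ℝ → (Fin n → ℝ), ContinuousOn z (Ici 0) →
      (∀ t ≥ (0:ℝ), z t = η + (1 / Real.Gamma μ) •
        ∫ τ in (0:ℝ)..t, ((Ψ t - Ψ τ) ^ (μ - 1) * deriv Ψ τ) • (A.mulVec (z τ) + g τ)) →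
      ∀ t ≥ (0:ℝ), z t = y t) :
    ∃ C' > (0:ℝ), ∀ t ≥ (0:ℝ),
      ‖y t‖ ≤ C' * Real.exp ((K ^ (1 / μ) + c) * Ψ t) :=
  psi_caputo_system_solution_exponentially_bounded_general n Ψ μ c M K A g y η hΨC1 hΨmono hΨnonneg
    hμ0 hc hM hgbound hK hy hyeq
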